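/- arXiv:1601.08180 — 2 statements merged into one kernel-verified Lean document; each statement's English description precedes it below -/
import Mathlib

section
/- Let η : 𝔻 → 𝔻 be analytic with η′(0) ≠ 0 and such that for w ∈ 𝔻, η(w) = 0 if and only if w = 0. Then there exists an analytic function F : ℂ⁺ → ℂ⁺ with F(z + 2π) = F(z) + 2π for all z ∈ ℂ⁺ such that exp(i·F(z)) = η(exp(iz)) for all z ∈ ℂ⁺. Moreover, if F̃ is another analytic self-map of ℂ⁺ with F̃(z + 2π) = F̃(z) + 2π and exp(i·F̃(z)) = η(exp(iz)) for all z ∈ ℂ⁺, then there is an integer n with F̃(z) = F(z) + 2πn for all z ∈ ℂ⁺. -/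
open Complex MeasureTheory Filter Topology

noncomputable section

/-- The open upper half-plane. -/
def UHP : Set ℂ := {z : ℂ | 0 < z.im}

/-- The open unit disk. -/
def uDisk : Set ℂ := {w : ℂ | ‖w‖ < 1}

section AuxLog
open Metric Set NNReal ENNReal

private lemma exists_log_disk (ψ : ℂ → ℂ) (hψ : DifferentiableOn ℂ ψ (ball (0:ℂ) 1))
    (hne : ∀ w ∈ ball (0:ℂ) 1, ψ w ≠ 0) :
    ∃ Λ : ℂ → ℂ, (∀ w ∈ ball (0:ℂ) 1, DifferentiableAt ℂ Λ w) ∧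
      (∀ w ∈ ball (0:ℂ) 1, Complex.exp (Λ w) = ψ w) := by
  classical
  set G : ℂ → ℂ := fun w => deriv ψ w / ψ w with hGdef
  have hG : DifferentiableOn ℂ G (ball (0:ℂ) 1) :=
    ((hψ.analyticOnNhd isOpen_ball).deriv.differentiableOn).div hψ hne
  obtain ⟨half, hhalf0, hhalf1⟩ : ∃ h : ℝ≥0, 0 < h ∧ (h:ℝ) < 1 := ⟨1/2, by norm_num, by norm_num⟩
  set p : FormalMultilinearSeries ℂ ℂ ℂ := cauchyPowerSeries G 0 half with hpdef
  have key : ∀ r : ℝ≥0, 0 < r → (r:ℝ) < 1 → HasFPowerSeriesOnBall G p 0 r := by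
    intro r hr0 hr1
    have hsub : closedBall (0:ℂ) r ⊆ ball (0:ℂ) 1 := by
      intro x hx
      simp only [mem_closedBall, mem_ball] at hx ⊢
      exact lt_of_le_of_lt hx hr1
    have hq : HasFPowerSeriesOnBall G (cauchyPowerSeries G 0 r) 0 r :=
      (hG.mono hsub).hasFPowerSeriesOnBall (by exact_mod_cast hr0)
    have hsub2 : closedBall (0:ℂ) half ⊆ ball (0:ℂ) 1 := by
      intro x hx
      simp only [mem_closedBall, mem_ball] at hx ⊢
      exact lt_of_le_of_lt hx hhalf1
    have hp : HasFPowerSeriesOnBall G p 0 half :=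
      (hG.mono hsub2).hasFPowerSeriesOnBall hhalf0
    rw [hp.hasFPowerSeriesAt.eq_formalMultilinearSeries hq.hasFPowerSeriesAt]
    exact hq
  have hrad : (1:ℝ≥0∞) ≤ p.radius := by
    refine ENNReal.le_of_forall_nnreal_lt ?_
    intro r hr
    rcases eq_or_lt_of_le (show (0:ℝ≥0) ≤ r from zero_le) with h0 | h0
    · simp [← h0]
    · exact (key r h0 (by exact_mod_cast hr)).r_le
  set Λ : ℂ → ℂ := fun w => Complex.log (ψ 0) + ∑' n : ℕ, p.coeff n / (n + 1) * w ^ (n + 1)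
    with hΛdef
  have hΛderiv : ∀ w ∈ ball (0:ℂ) 1, HasDerivAt Λ (G w) w := by
    intro w hw
    simp only [mem_ball, dist_zero_right] at hw
    obtain ⟨r, hwr, hr1⟩ : ∃ r : ℝ≥0, ‖w‖ < r ∧ (r:ℝ) < 1 :=
      ⟨⟨(‖w‖ + 1)/2, by positivity⟩,
        by show ‖w‖ < (‖w‖ + 1)/2; linarith [norm_nonneg w],
        by show (‖w‖ + 1)/2 < (1:ℝ); linarith [norm_nonneg w]⟩
    have hr0 : 0 < r := by
      have : (0:ℝ) < r := (norm_nonneg w).trans_lt hwr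
      exact_mod_cast this
    have hsum : Summable (fun n : ℕ => ‖p n‖ * (r:ℝ)^n) :=
      p.summable_norm_mul_pow (lt_of_lt_of_le (by exact_mod_cast hr1) hrad)
    have hDA : HasDerivAt (fun z : ℂ => ∑' n : ℕ, p.coeff n / (n+1) * z^(n+1))
        (∑' n : ℕ, p.coeff n * w^n) w := by
      refine hasDerivAt_tsum_of_isPreconnected hsum isOpen_ball
        (convex_ball (0:ℂ) r).isPreconnected
        (g := fun (n : ℕ) (z : ℂ) => p.coeff n / (n+1) * z^(n+1))
        (g' := fun (n : ℕ) (z : ℂ) => p.coeff n * z^n) ?_ ?_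
        (mem_ball_self (by exact_mod_cast hr0)) ?_ ?_
      · intro n y hy
        have h1 := (hasDerivAt_pow (n+1) y).const_mul (p.coeff n / ((n:ℂ)+1))
        refine h1.congr_deriv ?_
        have hne' : ((n:ℂ)+1) ≠ 0 := Nat.cast_add_one_ne_zero n
        rw [Nat.add_sub_cancel, Nat.cast_add_one, ← mul_assoc, div_mul_cancel₀ _ hne']
      · intro n y hy
        simp only [mem_ball, dist_zero_right] at hy
        rw [norm_mul, norm_pow]
        have h1 : ‖p.coeff n‖ ≤ ‖p n‖ := by
          show ‖p n 1‖ ≤ ‖p n‖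
          have := (p n).le_opNorm 1
          simpa using this
        exact mul_le_mul h1 (pow_le_pow_left₀ (norm_nonneg y) hy.le n)
          (by positivity) (norm_nonneg _)
      · simpa using summable_zero
      · simp only [mem_ball, dist_zero_right]; exact hwr
    have hGsum : HasSum (fun n : ℕ => p.coeff n * w^n) (G w) := by
      have h := (key r hr0 hr1).hasSum (y := w) ?_
      · have h2 : ∀ n : ℕ, (p n fun _ => w) = p.coeff n * w^n := by
          intro n
          rw [FormalMultilinearSeries.apply_eq_pow_smul_coeff, smul_eq_mul, mul_comm]
        simpa [h2] using h
      · simp only [EMetric.mem_ball, edist_zero_right]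
        have hwr' : ‖w‖₊ < r := by exact_mod_cast hwr
        exact ENNReal.coe_lt_coe.mpr hwr'
    have hfinal := hDA.const_add (Complex.log (ψ 0))
    rw [hGsum.tsum_eq] at hfinal
    exact hfinal
  have hΛ0 : Λ 0 = Complex.log (ψ 0) := by
    have : ∀ n : ℕ, p.coeff n / (n+1) * (0:ℂ)^(n+1) = 0 := by
      intro n; simp
    simp [hΛdef, this]
  have hψ0 : ψ 0 ≠ 0 := hne 0 (by simp)
  have hmain : ∀ w ∈ ball (0:ℂ) 1, ψ w * Complex.exp (-Λ w) = ψ 0 * Complex.exp (-Λ 0) := by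
    intro w hw
    have hder2 : ∀ x ∈ ball (0:ℂ) 1,
        HasDerivAt (fun z => ψ z * Complex.exp (-Λ z)) 0 x := by
      intro x hx
      have hψx : HasDerivAt ψ (deriv ψ x) x :=
        (hψ.differentiableAt (isOpen_ball.mem_nhds hx)).hasDerivAt
      have hΛx := hΛderiv x hx
      have hexp : HasDerivAt (fun z => Complex.exp (-Λ z))
          (Complex.exp (-Λ x) * (-(G x))) x := (hΛx.neg).cexp
      have hmul := hψx.mul hexp
      refine hmul.congr_deriv ?_
      have hψxne := hne x hx
      simp only [hGdef]
      field_simp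
      ring
    have hdiffOn : DifferentiableOn ℂ (fun z => ψ z * Complex.exp (-Λ z)) (ball (0:ℂ) 1) :=
      fun x hx => ((hder2 x hx).differentiableAt).differentiableWithinAt
    refine (convex_ball (0:ℂ) 1).is_const_of_fderivWithin_eq_zero hdiffOn ?_ hw
      (mem_ball_self one_pos)
    intro x hx
    rw [fderivWithin_of_isOpen isOpen_ball hx, (hder2 x hx).hasFDerivAt.fderiv]
    ext1
    simp
  refine ⟨Λ, fun w hw => (hΛderiv w hw).differentiableAt, fun w hw => ?_⟩
  have h1 := hmain w hw
  have h2 : ψ 0 * Complex.exp (-Λ 0) = 1 := by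
    rw [hΛ0, Complex.exp_neg, Complex.exp_log hψ0, mul_inv_cancel₀ hψ0]
  rw [h2, Complex.exp_neg] at h1
  field_simp at h1
  exact h1.symm

end AuxLog

lemma uDisk_eq : uDisk = Metric.ball (0:ℂ) 1 := by
  ext w; simp [uDisk, Metric.mem_ball, Complex.dist_eq]

/-- Surjectivity of the map `F ↦ η`: every analytic self-map `η` of 𝔻 with `η′(0) ≠ 0`
vanishing only at `0` arises from an analytic self-map `F` of ℂ⁺ with
`F(z+2π) = F(z)+2π` via `e^{iF(z)} = η(e^{iz})`, uniquely modulo addition of `2πn`. -/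
theorem eta_map_surjective
    (η : ℂ → ℂ)
    (hd : DifferentiableOn ℂ η uDisk) (hm : Set.MapsTo η uDisk uDisk)
    (hder : deriv η 0 ≠ 0)
    (hzero : ∀ w ∈ uDisk, (η w = 0 ↔ w = 0)) :
    ∃ F : ℂ → ℂ,
      DifferentiableOn ℂ F UHP ∧ Set.MapsTo F UHP UHP ∧
      (∀ z ∈ UHP, F (z + 2 * Real.pi) = F z + 2 * Real.pi) ∧
      (∀ z ∈ UHP, Complex.exp (Complex.I * F z) = η (Complex.exp (Complex.I * z))) ∧
      (∀ F' : ℂ → ℂ,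
        DifferentiableOn ℂ F' UHP → Set.MapsTo F' UHP UHP →
        (∀ z ∈ UHP, F' (z + 2 * Real.pi) = F' z + 2 * Real.pi) →
        (∀ z ∈ UHP, Complex.exp (Complex.I * F' z) = η (Complex.exp (Complex.I * z))) →
        ∃ n : ℤ, ∀ z ∈ UHP, F' z = F z + 2 * Real.pi * n) := by
  classical
  rw [uDisk_eq] at hd hm hzero
  have h0mem : (0:ℂ) ∈ Metric.ball (0:ℂ) 1 := by simp
  have hη0 : η 0 = 0 := (hzero 0 h0mem).mpr rfl
  set ψ : ℂ → ℂ := dslope η 0 with hψdef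
  have hψd : DifferentiableOn ℂ ψ (Metric.ball (0:ℂ) 1) := by
    intro w hw
    rcases eq_or_ne w 0 with rfl | hwne
    · obtain ⟨q, hq⟩ : AnalyticAt ℂ η 0 := hd.analyticAt (Metric.isOpen_ball.mem_nhds h0mem)
      exact (AnalyticAt.differentiableAt ⟨_, hq.has_fpower_series_dslope_fslope⟩).differentiableWithinAt
    · exact (differentiableWithinAt_dslope_of_ne hwne).2 (hd w hw)
  have hψne : ∀ w ∈ Metric.ball (0:ℂ) 1, ψ w ≠ 0 := by
    intro w hw
    rcases eq_or_ne w 0 with rfl | hwne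
    · simpa [hψdef, dslope_same] using hder
    · rw [hψdef, dslope_of_ne _ hwne, slope_def_field, hη0]
      have hηw : η w ≠ 0 := fun h => hwne ((hzero w hw).mp h)
      simp only [sub_zero]
      exact div_ne_zero hηw hwne
  have hηfact : ∀ w ∈ Metric.ball (0:ℂ) 1, η w = w * ψ w := by
    intro w hw
    rcases eq_or_ne w 0 with rfl | hwne
    · simp [hη0]
    · rw [hψdef, dslope_of_ne _ hwne, slope_def_field, hη0, sub_zero, sub_zero,
        mul_div_cancel₀ _ hwne]
  obtain ⟨Λ, hΛd, hΛexp⟩ := exists_log_disk ψ hψd hψne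
  -- membership of e^{iz} in the ball
  have hmem : ∀ z ∈ UHP, Complex.exp (Complex.I * z) ∈ Metric.ball (0:ℂ) 1 := by
    intro z hz
    have hz' : 0 < z.im := hz
    simp only [Metric.mem_ball, Complex.dist_eq, sub_zero, Complex.norm_exp]
    have : (Complex.I * z).re = -z.im := by simp [Complex.mul_re]
    rw [this]
    exact Real.exp_lt_one_iff.mpr (by linarith)
  set F : ℂ → ℂ := fun z => z - Complex.I * Λ (Complex.exp (Complex.I * z)) with hFdef
  have hkey : ∀ z ∈ UHP, Complex.exp (Complex.I * F z) = η (Complex.exp (Complex.I * z)) := by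
    intro z hz
    have h1 : Complex.I * F z = Complex.I * z + Λ (Complex.exp (Complex.I * z)) := by
      simp only [hFdef]
      ring_nf
      rw [Complex.I_sq]
      ring
    rw [h1, Complex.exp_add, hΛexp _ (hmem z hz), hηfact _ (hmem z hz)]
  have hFd : DifferentiableOn ℂ F UHP := by
    intro z hz
    have h1 : DifferentiableAt ℂ (fun z => Complex.exp (Complex.I * z)) z := by fun_prop
    have h2 : DifferentiableAt ℂ (fun z => Λ (Complex.exp (Complex.I * z))) z :=
      (hΛd _ (hmem z hz)).comp z h1
    exact (differentiableAt_id.sub (h2.const_mul _)).differentiableWithinAt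
  have hFm : Set.MapsTo F UHP UHP := by
    intro z hz
    have h1 : ‖Complex.exp (Complex.I * F z)‖ < 1 := by
      rw [hkey z hz]
      have := hm (hmem z hz)
      simpa [Complex.dist_eq] using this
    rw [Complex.norm_exp] at h1
    have h2 : (Complex.I * F z).re = -(F z).im := by simp [Complex.mul_re]
    rw [h2, Real.exp_lt_one_iff] at h1
    show 0 < (F z).im
    linarith
  have hper : ∀ z ∈ UHP, F (z + 2 * Real.pi) = F z + 2 * Real.pi := by
    intro z hz
    have h1 : Complex.exp (Complex.I * (z + 2 * Real.pi)) = Complex.exp (Complex.I * z) := by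
      rw [show Complex.I * (z + 2 * Real.pi) = Complex.I * z + 2 * Real.pi * Complex.I by ring,
        Complex.exp_add, Complex.exp_two_pi_mul_I, mul_one]
    simp only [hFdef, h1]
    ring
  refine ⟨F, hFd, hFm, hper, hkey, ?_⟩
  intro F' hF'd hF'm hF'p hF'e
  have hdiff : ∀ z ∈ UHP, ∃ n : ℤ, F' z - F z = 2 * Real.pi * n := by
    intro z hz
    have h1 : Complex.exp (Complex.I * F' z) = Complex.exp (Complex.I * F z) := by
      rw [hkey z hz, hF'e z hz]
    obtain ⟨n, hn⟩ := Complex.exp_eq_exp_iff_exists_int.mp h1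
    refine ⟨n, ?_⟩
    have h2 : Complex.I * (F' z - F z) = Complex.I * (2 * Real.pi * n) := by
      rw [mul_sub, hn]; ring
    exact mul_left_cancel₀ Complex.I_ne_zero h2
  -- constancy of F' - F on the preconnected set UHP
  have hIU : Complex.I ∈ UHP := by simp [UHP]
  obtain ⟨n₀, hn₀⟩ := hdiff Complex.I hIU
  refine ⟨n₀, fun z hz => ?_⟩
  have hpre : IsPreconnected UHP := (convex_halfSpace_im_gt (0:ℝ)).isPreconnected
  have hcont : ContinuousOn (fun z => F' z - F z) UHP :=
    (hF'd.continuousOn).sub (hFd.continuousOn)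
  have hmapsto : Set.MapsTo (fun z => F' z - F z) UHP
      ((AddSubgroup.zmultiples ((2 * Real.pi : ℝ) : ℂ) : AddSubgroup ℂ) : Set ℂ) := by
    intro z hz
    obtain ⟨n, hn⟩ := hdiff z hz
    refine AddSubgroup.mem_zmultiples_iff.mpr ⟨n, ?_⟩
    show n • (((2 * Real.pi : ℝ)) : ℂ) = F' z - F z
    rw [hn, zsmul_eq_mul]
    push_cast
    ring
  haveI hdt : DiscreteTopology
      ((AddSubgroup.zmultiples ((2 * Real.pi : ℝ) : ℂ) : AddSubgroup ℂ) : Set ℂ) :=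
    NormedSpace.discreteTopology_zmultiples _
  have hconst := hpre.constant_of_mapsTo (isDiscrete_iff_discreteTopology.mpr hdt) hcont hmapsto hz hIU
  rw [sub_eq_iff_eq_add] at hconst
  rw [hconst, hn₀]
  push_cast
  ring
end
end

section
/- Let μ be a probability measure on ℝ whose F-transform satisfies F_μ(z + 2π) = F_μ(z) + 2π on ℂ⁺, and let α, β ∈ ℝ with α ≠ β be atoms of μ (that is, μ({α}) > 0 and μ({β}) > 0). Then min(μ({α}), μ({β})) < 2π/|α − β|. -/
open Complex MeasureTheory Filter Topology

noncomputable section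

/-- The Cauchy transform of a measure on ℝ. -/
def cauchyG (μ : Measure ℝ) (z : ℂ) : ℂ := ∫ x, (z - (x : ℂ))⁻¹ ∂μ

/-- The F-transform of a measure on ℝ. -/
def Ftrans (μ : Measure ℝ) (z : ℂ) : ℂ := (cauchyG μ z)⁻¹

/-- The class L: measures whose F-transform commutes with translation by 2π. -/
def inClassL (μ : Measure ℝ) : Prop :=
  ∀ z ∈ UHP, Ftrans μ (z + 2 * Real.pi) = Ftrans μ z + 2 * Real.pi

lemma sub_ofReal_ne {z : ℂ} (hz : 0 < z.im) (x : ℝ) : z - (x:ℂ) ≠ 0 := by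
  intro h
  have : (z - (x:ℂ)).im = 0 := by rw [h]; simp
  simp only [Complex.sub_im, Complex.ofReal_im, sub_zero] at this
  linarith

lemma integrable_inv (μ : Measure ℝ) [IsFiniteMeasure μ] {z : ℂ} (hz : 0 < z.im) :
    Integrable (fun x : ℝ => (z - (x:ℂ))⁻¹) μ := by
  have hmeas : AEStronglyMeasurable (fun x : ℝ => (z - (x:ℂ))⁻¹) μ :=
    Continuous.aestronglyMeasurable
      ((continuous_const.sub Complex.continuous_ofReal).inv₀ (fun x => sub_ofReal_ne hz x))
  refine Integrable.mono' (integrable_const (z.im)⁻¹) hmeas ?_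
  refine Eventually.of_forall (fun x => ?_)
  rw [norm_inv]
  have h1 : z.im ≤ ‖z - (x:ℂ)‖ := by
    have := Complex.abs_im_le_norm (z - (x:ℂ))
    simp only [Complex.sub_im, Complex.ofReal_im, sub_zero] at this
    calc z.im ≤ |z.im| := le_abs_self _
    _ ≤ ‖z - (x:ℂ)‖ := this
  exact inv_anti₀ hz h1

lemma atom_le_neg_im_G (μ : Measure ℝ) [IsFiniteMeasure μ] {z : ℂ} (hz : 0 < z.im) (γ : ℝ) :
    (μ {γ}).toReal * (z.im / Complex.normSq (z - (γ:ℂ))) ≤ (- cauchyG μ z).im := by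
  have hint := integrable_inv μ hz
  have him : (- cauchyG μ z).im = ∫ x, z.im / Complex.normSq (z - (x:ℂ)) ∂μ := by
    rw [Complex.neg_im, cauchyG,
      show (∫ x, (z - (x:ℂ))⁻¹ ∂μ).im = ∫ x, ((z - (x:ℂ))⁻¹).im ∂μ from (integral_im hint).symm,
      ← integral_neg]
    refine integral_congr_ae (Eventually.of_forall fun x => ?_)
    show -((z - (x:ℂ))⁻¹).im = z.im / Complex.normSq (z - (x:ℂ))
    rw [Complex.inv_im]
    simp [neg_div]
  rw [him]
  have hnonneg : 0 ≤ᵐ[μ] fun x : ℝ => z.im / Complex.normSq (z - (x:ℂ)) :=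
    Eventually.of_forall fun x => div_nonneg hz.le (Complex.normSq_nonneg _)
  have hint2 : Integrable (fun x : ℝ => z.im / Complex.normSq (z - (x:ℂ))) μ := by
    refine (hint.neg).im.congr (Eventually.of_forall fun x => ?_)
    show -((z - (x:ℂ))⁻¹).im = _
    rw [Complex.inv_im]
    simp [neg_div]
  calc (μ {γ}).toReal * (z.im / Complex.normSq (z - (γ:ℂ)))
      = ∫ _x in ({γ}:Set ℝ), z.im / Complex.normSq (z - (γ:ℂ)) ∂μ := by
        rw [setIntegral_const]; simp [smul_eq_mul, measureReal_def]
    _ = ∫ x in ({γ}:Set ℝ), z.im / Complex.normSq (z - (x:ℂ)) ∂μ :=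
        (setIntegral_congr_fun (measurableSet_singleton γ)
          (fun x hx => by simp only [Set.mem_singleton_iff] at hx; rw [hx])).symm
    _ ≤ ∫ x, z.im / Complex.normSq (z - (x:ℂ)) ∂μ := setIntegral_le_integral hint2 hnonneg
lemma im_ofReal_add_mul_I (γ y : ℝ) : ((γ:ℂ) + y * I).im = y := by simp

lemma tendsto_mul_G (μ : Measure ℝ) [IsProbabilityMeasure μ] (γ : ℝ) :
    Tendsto (fun y : ℝ => (y:ℂ) * I * cauchyG μ ((γ:ℂ) + y * I)) (𝓝[>] 0)
      (𝓝 ((μ {γ}).toReal : ℂ)) := by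
  have key : Tendsto (fun y : ℝ => ∫ x, (y:ℂ) * I * ((γ:ℂ) + y * I - (x:ℂ))⁻¹ ∂μ) (𝓝[>] 0)
      (𝓝 (∫ x, Set.indicator {γ} (fun _ => (1:ℂ)) x ∂μ)) := by
    refine tendsto_integral_filter_of_dominated_convergence (fun _ => (1:ℝ)) ?_ ?_
      (integrable_const 1) ?_
    · filter_upwards [self_mem_nhdsWithin] with y (hy : 0 < y)
      have hz : (0:ℝ) < ((γ:ℂ) + y * I).im := by rw [im_ofReal_add_mul_I]; exact hy
      exact Continuous.aestronglyMeasurable (continuous_const.mul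
        ((continuous_const.sub Complex.continuous_ofReal).inv₀ (fun x => sub_ofReal_ne hz x)))
    · filter_upwards [self_mem_nhdsWithin] with y (hy : 0 < y)
      refine Eventually.of_forall fun x => ?_
      rw [norm_mul]
      have h1 : ‖(y:ℂ) * I‖ = y := by
        rw [norm_mul, Complex.norm_I, mul_one, Complex.norm_real, Real.norm_eq_abs, abs_of_pos hy]
      rw [h1, norm_inv]
      have h2 : y ≤ ‖(γ:ℂ) + y * I - (x:ℂ)‖ := by
        have := Complex.abs_im_le_norm ((γ:ℂ) + y * I - (x:ℂ))
        simp only [Complex.sub_im, Complex.ofReal_im, sub_zero, im_ofReal_add_mul_I] at this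
        calc y ≤ |y| := le_abs_self _
        _ ≤ _ := this
      calc y * ‖(γ:ℂ) + y * I - (x:ℂ)‖⁻¹ ≤ y * y⁻¹ :=
            mul_le_mul_of_nonneg_left (inv_anti₀ hy h2) hy.le
        _ = 1 := mul_inv_cancel₀ hy.ne'
    · refine Eventually.of_forall fun x => ?_
      by_cases hx : x = γ
      · subst hx
        have : ∀ y ∈ Set.Ioi (0:ℝ), (y:ℂ) * I * ((x:ℂ) + y * I - (x:ℂ))⁻¹ = 1 := by
          intro y hy
          have hy' : (y:ℂ) * I ≠ 0 := by
            simp only [ne_eq, mul_eq_zero, Complex.I_ne_zero, or_false, Complex.ofReal_eq_zero]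
            exact (ne_of_gt hy)
          rw [add_sub_cancel_left, mul_inv_cancel₀ hy']
        rw [show ({x}:Set ℝ).indicator (fun _ => (1:ℂ)) x = 1 from by simp]
        exact Tendsto.congr' (eventually_nhdsWithin_of_forall (fun y hy => (this y hy).symm))
          tendsto_const_nhds
      · rw [show ({γ}:Set ℝ).indicator (fun _ => (1:ℂ)) x = 0 from by simp [hx]]
        have hcont : Tendsto (fun y : ℝ => (y:ℂ) * I * ((γ:ℂ) + y * I - (x:ℂ))⁻¹) (𝓝 0)
            (𝓝 ((0:ℂ) * I * ((γ:ℂ) + 0 * I - (x:ℂ))⁻¹)) := by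
          refine Tendsto.mul ?_ ?_
          · exact ((Complex.continuous_ofReal.tendsto 0).mul_const I)
          · refine Tendsto.inv₀ ?_ ?_
            · exact ((continuous_const.add ((Complex.continuous_ofReal).mul
                continuous_const)).sub continuous_const).tendsto 0
            · intro h
              apply hx
              have h2 : ((γ:ℂ) + 0 * I - (x:ℂ)) = ((γ - x : ℝ) : ℂ) := by push_cast; ring
              rw [h2, Complex.ofReal_eq_zero] at h
              linarith [sub_eq_zero.mp h]
        have h3 := hcont.mono_left (nhdsWithin_le_nhds (s := Set.Ioi (0:ℝ)))
        simpa using h3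
  have heq : ∀ y ∈ Set.Ioi (0:ℝ), (∫ x, (y:ℂ) * I * ((γ:ℂ) + y * I - (x:ℂ))⁻¹ ∂μ)
      = (y:ℂ) * I * cauchyG μ ((γ:ℂ) + y * I) := by
    intro y hy
    rw [cauchyG, integral_const_mul]
  have hval : (∫ x, Set.indicator {γ} (fun _ => (1:ℂ)) x ∂μ) = ((μ {γ}).toReal : ℂ) := by
    rw [integral_indicator (measurableSet_singleton γ), setIntegral_const]
    simp [measureReal_def]
  rw [hval] at key
  exact Tendsto.congr' (eventually_nhdsWithin_of_forall heq) key
lemma F_shift (μ : Measure ℝ) (hL : inClassL μ) (n : ℕ) :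
    ∀ z ∈ UHP, Ftrans μ (z + 2 * Real.pi * n) = Ftrans μ z + 2 * Real.pi * n := by
  induction n with
  | zero => intro z hz; simp
  | succ k ih =>
    intro z hz
    have hz' : z + 2 * Real.pi * k ∈ UHP := by
      simp only [UHP, Set.mem_setOf_eq] at hz ⊢
      simp [hz]
    have h1 := hL (z + 2 * Real.pi * k) hz'
    have h2 := ih z hz
    push_cast
    rw [show z + 2 * (Real.pi:ℂ) * (k + 1) = z + 2 * Real.pi * k + 2 * Real.pi by ring,
      h1, h2]
    ring

/-- The key inequality: for μ in class L with atoms at α and β. -/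
lemma key_ineq (μ : Measure ℝ) [IsProbabilityMeasure μ] (hL : inClassL μ)
    (α β : ℝ) (hβ : 0 < μ {β}) (n : ℕ) :
    (μ {α}).toReal * (μ {β}).toReal * (2 * Real.pi * (n+1))^2 ≤ (β - α + 2 * Real.pi * (n+1))^2 := by
  set a : ℝ := (μ {α}).toReal with ha
  set b : ℝ := (μ {β}).toReal with hb
  have hbpos : 0 < b := ENNReal.toReal_pos hβ.ne' (measure_ne_top μ _)
  set c : ℝ := 2 * Real.pi * (n+1) with hc
  have hcpos : 0 < c := by positivity
  -- the inequality at level y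
  have main : ∀ y ∈ Set.Ioi (0:ℝ),
      a * Complex.normSq (Ftrans μ ((β:ℂ) + y * I) + c)
        ≤ ((Ftrans μ ((β:ℂ) + y * I)).im / y) * Complex.normSq ((((β - α + c : ℝ)):ℂ) + y * I) := by
    intro y hy
    set w : ℂ := (β:ℂ) + y * I with hw
    have hwim : w.im = y := by simp [hw]
    have hwUHP : w ∈ UHP := by simp only [UHP, Set.mem_setOf_eq, hwim]; exact hy
    set z : ℂ := w + c with hz
    have hzim : z.im = y := by simp [hz, hwim]
    have hzpos : 0 < z.im := by rw [hzim]; exact hy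
    -- F(z) = F(w) + c
    have hFz : Ftrans μ z = Ftrans μ w + c := by
      have h := F_shift μ hL (n+1) w hwUHP
      have hcc : (c:ℂ) = 2 * (Real.pi:ℂ) * ((n+1 : ℕ):ℂ) := by rw [hc]; push_cast; ring
      rw [hz, hcc, h]
    -- -Im G(z) > 0
    have hy' : (0:ℝ) < y := hy
    have hGb := atom_le_neg_im_G μ hzpos β
    have hnsb : 0 < Complex.normSq (z - (β:ℂ)) := by
      refine Complex.normSq_pos.mpr (fun h => ?_)
      have himzb : (z - (β:ℂ)).im = y := by simp [hz, hw]
      rw [h] at himzb; simp at himzb; linarith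
    have hGzb : 0 < (- cauchyG μ z).im := by
      refine lt_of_lt_of_le ?_ hGb
      rw [hzim]
      have : 0 < b := hbpos
      exact mul_pos hbpos (div_pos hy' hnsb)
    have hGzne : cauchyG μ z ≠ 0 := by
      intro h
      rw [h] at hGzb; simp at hGzb
    -- Im F z = (-G z).im * normSq (F z)
    have hImF : (Ftrans μ z).im = (- cauchyG μ z).im * Complex.normSq (Ftrans μ z) := by
      rw [Ftrans, Complex.inv_im, Complex.normSq_inv, Complex.neg_im]
      field_simp
    -- atom bound at α
    have hGa := atom_le_neg_im_G μ hzpos α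
    have hnsa : 0 < Complex.normSq (z - (α:ℂ)) := by
      refine Complex.normSq_pos.mpr (fun h => ?_)
      have himza : (z - (α:ℂ)).im = y := by simp [hz, hw]
      rw [h] at himza; simp at himza; linarith
    have step1 : a * (y / Complex.normSq (z - (α:ℂ))) * Complex.normSq (Ftrans μ z)
        ≤ (Ftrans μ z).im := by
      rw [hImF]
      have h5 := mul_le_mul_of_nonneg_right hGa (Complex.normSq_nonneg (Ftrans μ z))
      rw [hzim] at h5
      exact h5
    have hzα : z - (α:ℂ) = (((β - α + c : ℝ)):ℂ) + y * I := by
      rw [hz, hw]; push_cast; ring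
    have hImFz : (Ftrans μ z).im = (Ftrans μ w).im := by rw [hFz]; simp
    have hnsFz : Complex.normSq (Ftrans μ z) = Complex.normSq (Ftrans μ w + c) := by
      rw [hFz]
    rw [hzα] at step1 hnsa
    rw [hImFz, hnsFz] at step1
    set N : ℝ := Complex.normSq ((((β - α + c : ℝ)):ℂ) + y * I) with hN
    set S : ℝ := Complex.normSq (Ftrans μ w + c) with hS
    have hyne : y ≠ 0 := hy'.ne'
    have hNne : N ≠ 0 := hnsa.ne'
    calc a * S = (a * (y / N) * S) * (N / y) := by field_simp
      _ ≤ (Ftrans μ w).im * (N / y) :=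
          mul_le_mul_of_nonneg_right step1 (by positivity)
      _ = ((Ftrans μ w).im / y) * N := by field_simp
  -- now take the limit y → 0+
  set g : ℝ → ℂ := fun y => (y:ℂ) * I * cauchyG μ ((β:ℂ) + y * I) with hg
  have hgten : Tendsto g (𝓝[>] 0) (𝓝 ((b:ℝ):ℂ)) := tendsto_mul_G μ β
  have hbne : ((b:ℝ):ℂ) ≠ 0 := by
    simp only [ne_eq, Complex.ofReal_eq_zero]
    exact hbpos.ne'
  have hginv : Tendsto (fun y => (g y)⁻¹) (𝓝[>] 0) (𝓝 (((b:ℝ):ℂ))⁻¹) :=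
    hgten.inv₀ hbne
  have hFeq : ∀ y ∈ Set.Ioi (0:ℝ), Ftrans μ ((β:ℂ) + y * I) = (y:ℂ) * I * (g y)⁻¹ := by
    intro y hy
    have hy' : (0:ℝ) < y := hy
    set w : ℂ := (β:ℂ) + y * I with hw
    have hwim : w.im = y := by simp [hw]
    have hwpos : 0 < w.im := by rw [hwim]; exact hy'
    have hGw : cauchyG μ w ≠ 0 := by
      intro h
      have hGb := atom_le_neg_im_G μ hwpos β
      have hns : 0 < Complex.normSq (w - (β:ℂ)) := by
        refine Complex.normSq_pos.mpr (fun h2 => ?_)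
        have : (w - (β:ℂ)).im = y := by simp [hw]
        rw [h2] at this; simp at this; linarith
      rw [h, hwim] at hGb
      simp only [neg_zero, Complex.zero_im] at hGb
      have : 0 < b * (y / Complex.normSq (w - (β:ℂ))) :=
        mul_pos hbpos (div_pos hy' hns)
      linarith
    have hyI : (y:ℂ) * I ≠ 0 := by
      simp only [ne_eq, mul_eq_zero, Complex.I_ne_zero, or_false, Complex.ofReal_eq_zero]
      exact hy'.ne'
    rw [Ftrans, hg]
    field_simp
    rw [← hw, mul_comm (cauchyG μ w), div_self (mul_ne_zero (by exact_mod_cast hy'.ne') hGw)]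
  have hF0 : Tendsto (fun y : ℝ => Ftrans μ ((β:ℂ) + y * I)) (𝓝[>] 0) (𝓝 0) := by
    have h1 : Tendsto (fun y : ℝ => (y:ℂ) * I * (g y)⁻¹) (𝓝[>] 0)
        (𝓝 ((0:ℂ) * I * (((b:ℝ):ℂ))⁻¹)) := by
      refine Tendsto.mul ?_ hginv
      exact (((Complex.continuous_ofReal.tendsto 0).mul_const I).mono_left nhdsWithin_le_nhds)
    simp only [Complex.ofReal_zero, zero_mul] at h1
    exact Tendsto.congr' (eventually_nhdsWithin_of_forall (fun y hy => (hFeq y hy).symm)) h1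
  have hImdiv : Tendsto (fun y : ℝ => (Ftrans μ ((β:ℂ) + y * I)).im / y) (𝓝[>] 0)
      (𝓝 (1/b)) := by
    have h1 : Tendsto (fun y : ℝ => ((g y)⁻¹).re) (𝓝[>] 0) (𝓝 ((((b:ℝ):ℂ))⁻¹).re) :=
      (Complex.continuous_re.tendsto _).comp hginv
    have h2 : ((((b:ℝ):ℂ))⁻¹).re = 1/b := by
      rw [← Complex.ofReal_inv]
      simp [one_div]
    rw [h2] at h1
    refine Tendsto.congr' (eventually_nhdsWithin_of_forall (fun y hy => ?_)) h1
    have hy' : (0:ℝ) < y := hy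
    show (g y)⁻¹.re = (Ftrans μ ((β:ℂ) + y * I)).im / y
    rw [hFeq y hy,
      show ((y:ℂ) * I * (g y)⁻¹).im = y * ((g y)⁻¹).re from by simp [Complex.mul_im],
      mul_div_cancel_left₀ _ hy'.ne']
  -- LHS limit
  have hLHS : Tendsto (fun y : ℝ => a * Complex.normSq (Ftrans μ ((β:ℂ) + y * I) + c))
      (𝓝[>] 0) (𝓝 (a * c^2)) := by
    have h1 : Tendsto (fun y : ℝ => Ftrans μ ((β:ℂ) + y * I) + (c:ℂ)) (𝓝[>] 0)
        (𝓝 ((0:ℂ) + c)) := hF0.add tendsto_const_nhds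
    have h2 := (Complex.continuous_normSq.tendsto _).comp h1
    have h3 : Complex.normSq ((0:ℂ) + (c:ℂ)) = c^2 := by
      rw [zero_add, Complex.normSq_ofReal]; ring
    rw [h3] at h2
    exact (tendsto_const_nhds.mul h2)
  -- RHS limit
  have hRHS : Tendsto (fun y : ℝ => ((Ftrans μ ((β:ℂ) + y * I)).im / y)
      * Complex.normSq ((((β - α + c : ℝ)):ℂ) + y * I)) (𝓝[>] 0)
      (𝓝 ((1/b) * (β - α + c)^2)) := by
    have h1 : Tendsto (fun y : ℝ => Complex.normSq ((((β - α + c : ℝ)):ℂ) + y * I))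
        (𝓝[>] 0) (𝓝 (Complex.normSq ((((β - α + c : ℝ)):ℂ) + (0:ℝ) * I))) := by
      refine ((Complex.continuous_normSq.comp (continuous_const.add
        (Complex.continuous_ofReal.mul continuous_const))).tendsto 0).mono_left
        nhdsWithin_le_nhds
    have h2 : Complex.normSq ((((β - α + c : ℝ)):ℂ) + ((0:ℝ):ℂ) * I) = (β - α + c)^2 := by
      rw [Complex.ofReal_zero, zero_mul, add_zero, Complex.normSq_ofReal, sq]
    rw [h2] at h1
    exact hImdiv.mul h1
  have hlim : a * c^2 ≤ (1/b) * (β - α + c)^2 :=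
    le_of_tendsto_of_tendsto hLHS hRHS (eventually_nhdsWithin_of_forall main)
  calc a * b * c^2 = b * (a * c^2) := by ring
    _ ≤ b * ((1/b) * (β - α + c)^2) := mul_le_mul_of_nonneg_left hlim hbpos.le
    _ = (β - α + c)^2 := by field_simp
lemma arith_bound (a b d : ℝ) (ha : 0 < a) (hbp : 0 < b) (hd : 0 < d) (hab1 : a + b ≤ 1)
    (key : ∀ n : ℕ, a * b * (2*Real.pi*(n+1))^2 ≤ (2*Real.pi*(n+1) - d)^2) :
    min a b < 2*Real.pi/d := by
  have hπ := Real.pi_pos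
  set m := min a b with hm
  have hma : m ≤ a := min_le_left a b
  have hmb : m ≤ b := min_le_right a b
  have hm0 : 0 < m := lt_min ha hbp
  have hm12 : m ≤ 1/2 := by linarith
  rw [lt_div_iff₀ hd]
  by_cases hcase : d < 4 * Real.pi
  · nlinarith
  · push_neg at hcase
    set t : ℝ := d / (2*Real.pi) with htdef
    have ht2 : 2 ≤ t := by
      rw [htdef, le_div_iff₀ (by positivity)]
      linarith
    have htd : d = 2*Real.pi*t := by
      rw [htdef]; field_simp
    set k : ℕ := Nat.floor (t + 1/2) with hk
    have hk1 : 1 ≤ k := by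
      rw [hk]
      exact Nat.le_floor (by push_cast; linarith)
    have hk_le : (k:ℝ) ≤ t + 1/2 := Nat.floor_le (by linarith)
    have hk_gt : t - 1/2 < (k:ℝ) := by
      have := Nat.lt_floor_add_one (t + 1/2)
      push_cast at this ⊢
      rw [hk]
      push_cast
      linarith [Nat.lt_floor_add_one (t + 1/2)]
    have hkey := key (k - 1)
    have hcast : (((k - 1 : ℕ)):ℝ) + 1 = (k:ℝ) := by
      rw [Nat.cast_sub hk1]; push_cast; ring
    rw [hcast] at hkey
    -- m^2 (2πk)^2 ≤ (2πk - d)^2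
    have hab : m * m ≤ a * b := mul_le_mul hma hmb hm0.le ha.le
    have hk0 : (0:ℝ) < 2*Real.pi*(k:ℝ) := by
      have : (1:ℝ) ≤ (k:ℝ) := by exact_mod_cast hk1
      positivity
    have hsq : (m * (2*Real.pi*(k:ℝ)))^2 ≤ (2*Real.pi*(k:ℝ) - d)^2 := by nlinarith
    have habs : m * (2*Real.pi*(k:ℝ)) ≤ |2*Real.pi*(k:ℝ) - d| := by
      have h1 := Real.sqrt_le_sqrt hsq
      rwa [Real.sqrt_sq_eq_abs, Real.sqrt_sq_eq_abs, abs_of_pos (by positivity)] at h1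
    have hmul_le := mul_le_mul_of_nonneg_left hk_le (by positivity : (0:ℝ) ≤ 2*Real.pi)
    have hmul_gt := mul_lt_mul_of_pos_left hk_gt (by positivity : (0:ℝ) < 2*Real.pi)
    have habs2 : |2*Real.pi*(k:ℝ) - d| ≤ Real.pi := by
      rw [abs_le]
      constructor
      · nlinarith [hmul_gt, htd]
      · nlinarith [hmul_le, htd]
    have h8 : m * (2*Real.pi*(k:ℝ)) ≤ Real.pi := le_trans habs habs2
    have h9 : d - Real.pi ≤ 2*Real.pi*(k:ℝ) := by linarith [hmul_gt]
    have h7 : m * (d - Real.pi) ≤ Real.pi :=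
      le_trans (mul_le_mul_of_nonneg_left h9 hm0.le) h8
    have h10 : m * Real.pi ≤ (1/2) * Real.pi := mul_le_mul_of_nonneg_right hm12 hπ.le
    clear_value m t k
    linarith [h7, h10, hπ]


/-- For `μ ∈ L` with distinct atoms `α, β`, the smaller of the two weights is less
than `2π/|α − β|`. -/
theorem classL_atom_weight_bound
    (μ : Measure ℝ) [IsProbabilityMeasure μ] (hL : inClassL μ)
    (α β : ℝ) (hne : α ≠ β) (hα : 0 < μ {α}) (hβ : 0 < μ {β}) :
    min (μ {α}) (μ {β}) < ENNReal.ofReal (2 * Real.pi / |α - β|) := by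
  set a : ℝ := (μ {α}).toReal with ha
  set b : ℝ := (μ {β}).toReal with hb
  have hapos : 0 < a := ENNReal.toReal_pos hα.ne' (measure_ne_top μ _)
  have hbpos : 0 < b := ENNReal.toReal_pos hβ.ne' (measure_ne_top μ _)
  have hd : 0 < |α - β| := abs_pos.mpr (sub_ne_zero.mpr hne)
  have hab1 : a + b ≤ 1 := by
    have hdisj : Disjoint ({α} : Set ℝ) {β} := by
      rw [Set.disjoint_singleton]
      exact hne
    have hsum : μ {α} + μ {β} ≤ 1 := by
      rw [← measure_union hdisj (measurableSet_singleton β)]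
      exact prob_le_one
    calc a + b = (μ {α} + μ {β}).toReal :=
          (ENNReal.toReal_add (measure_ne_top μ _) (measure_ne_top μ _)).symm
      _ ≤ (1 : ENNReal).toReal := ENNReal.toReal_mono ENNReal.one_ne_top hsum
      _ = 1 := by simp
  have key : ∀ n : ℕ, a * b * (2*Real.pi*(n+1))^2 ≤ (2*Real.pi*(n+1) - |α - β|)^2 := by
    intro n
    rcases le_or_gt α β with h | h
    · have h1 := key_ineq μ hL β α hα n
      have h2 : |α - β| = β - α := by rw [abs_sub_comm, _root_.abs_of_nonneg (by linarith)]
      rw [h2]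
      calc a * b * (2*Real.pi*(n+1))^2 = b * a * (2*Real.pi*(n+1))^2 := by ring
        _ ≤ (α - β + 2*Real.pi*(n+1))^2 := h1
        _ = (2*Real.pi*(n+1) - (β - α))^2 := by ring
    · have h1 := key_ineq μ hL α β hβ n
      have h2 : |α - β| = α - β := _root_.abs_of_pos (by linarith)
      rw [h2]
      calc a * b * (2*Real.pi*(n+1))^2 ≤ (β - α + 2*Real.pi*(n+1))^2 := h1
        _ = (2*Real.pi*(n+1) - (α - β))^2 := by ring
  have mn : min a b < 2*Real.pi/|α - β| := arith_bound a b _ hapos hbpos hd hab1 key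
  have h1 : μ {α} = ENNReal.ofReal a := (ENNReal.ofReal_toReal (measure_ne_top μ _)).symm
  have h2 : μ {β} = ENNReal.ofReal b := (ENNReal.ofReal_toReal (measure_ne_top μ _)).symm
  rw [h1, h2,
    show min (ENNReal.ofReal a) (ENNReal.ofReal b) = ENNReal.ofReal (min a b) from
      (Monotone.map_min (fun _ _ hx => ENNReal.ofReal_le_ofReal hx)).symm]
  exact (ENNReal.ofReal_lt_ofReal_iff (div_pos (by positivity) hd)).mpr mn

end
end
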